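/- Matrix elements of the C-operator: for increasing sequences 1 ≤ x₁ < ⋯ < x_N ≤ M and 1 ≤ y₁ < ⋯ < y_{N+1} ≤ M, one has ⟨x₁⋯x_N| C(u) |y₁⋯y_{N+1}⟩ = Ḡ_{y,x}(u), where Ḡ_{y,x}(u) = 0 unless the interlacing condition y ≻ x holds (i.e. y₁ ≤ x₁ ≤ y₂ ≤ x₂ ≤ ⋯ ≤ x_N ≤ y_{N+1}), and if y ≻ x then, letting r₁ < ⋯ < r_{k+1} be the increasing sequence of those y_j (j=1,…,N+1) with y_j ∉ {x_{j−1}, x_j}, letting s₁ < ⋯ < s_k be the increasing sequence of those x_j (j=1,…,N) with x_j ∉ {y_j, y_{j+1}}, and setting s₀ = 0, s_{k+1} = M+1, Ḡ_{y,x}(u) = ((1−t)d)^{k+1} ((1−t)cu)^{k} · ∏_{j=1}^{k+1} (eu+tf)^{#{ℓ : r_j < x_ℓ < s_j}} (eu+f)^{s_j − r_j − 1 − #{ℓ : r_j < x_ℓ < s_j}} (atu+b)^{#{ℓ : s_{j−1} < x_ℓ < r_j}} (au+b)^{r_j − s_{j−1} − 1 − #{ℓ : s_{j−1} < x_ℓ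 < r_j}}. -/

import Mathlib

/-!
Expand `C(u)` over the auxiliary states `α₀ = 0, α₁, …, α_M = 1` between consecutive sites.
Every nonzero entry of `L` conserves the particle number, so a nonzero term forces
`α_j = #{m | y_m < j} - #{ℓ | x_ℓ < j}`; this is a `0/1` sequence exactly when `y ≻ x`, and then
`C(u)` is this single term. Sites occupied by `y` alone raise `α` from `0` to `1` (they are the
`r_j`), sites occupied by `x` alone lower it back (the `s_j`). Counting such sites below a given
one shows that they alternate, `s_{j-1} < r_j < s_j`, with `α = 0` on the gaps `(s_{j-1}, r_j)`
and `α = 1` on the gaps `(r_j, s_j)`. A site inside a gap is either empty or occupied by both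
`x` and `y`, which gives the four powers; the `r_j` and `s_j` contribute `(1-t)d` and `(1-t)cu`.
-/

open Finset

variable {K : Type*} [Field K]

/-- Matrix elements `⟨γ, δ| L(u) |α, β⟩` of the homogeneous `L`-operator:
`γ` auxiliary output, `δ` quantum output, `α` auxiliary input, `β` quantum input. -/
def LL (t a b c d e f u : K) (γ δ α β : Fin 2) : K :=
  if γ = 0 ∧ δ = 0 ∧ α = 0 ∧ β = 0 then a * u + b
  else if γ = 0 ∧ δ = 1 ∧ α = 0 ∧ β = 1 then a * t * u + b
  else if γ = 0 ∧ δ = 1 ∧ α = 1 ∧ β = 0 then (1 - t) * c * u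
  else if γ = 1 ∧ δ = 0 ∧ α = 0 ∧ β = 1 then (1 - t) * d
  else if γ = 1 ∧ δ = 0 ∧ α = 1 ∧ β = 0 then e * u + f
  else if γ = 1 ∧ δ = 1 ∧ α = 1 ∧ β = 1 then e * u + t * f
  else 0

/-- The operator `C(u) = ⟨1|ₐ L_{aM}(u) ⋯ L_{a1}(u) |0⟩ₐ` on `M` sites,
as a matrix in the standard basis of `(ℂ²)^{⊗M}` indexed by `Fin M → Fin 2`. -/
def Cop (M : ℕ) (t a b c d e f u : K) :
    Matrix (Fin M → Fin 2) (Fin M → Fin 2) K :=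
  Matrix.of fun γ β =>
    ∑ α : Fin (M + 1) → Fin 2,
      if α 0 = 0 ∧ α (Fin.last M) = 1 then
        ∏ j : Fin M, LL t a b c d e f u (α j.succ) (γ j) (α j.castSucc) (β j)
      else 0

/-- The basis vector index of `(ℂ²)^{⊗M}` with particles (`1`s) exactly at the sites
in the range of `x`. -/
def cfg {M N : ℕ} (x : Fin N → Fin M) : Fin M → Fin 2 :=
  fun i => if ∃ j, x j = i then 1 else 0

/-- The interlacing condition `y ≻ x`, i.e. `y₁ ≤ x₁ ≤ y₂ ≤ x₂ ≤ ⋯ ≤ x_N ≤ y_{N+1}`. -/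
def interlace {M N : ℕ} (y : Fin (N + 1) → Fin M) (x : Fin N → Fin M) : Prop :=
  ∀ j : Fin N, y j.castSucc ≤ x j ∧ x j ≤ y j.succ

instance {M N : ℕ} (y : Fin (N + 1) → Fin M) (x : Fin N → Fin M) :
    Decidable (interlace y x) :=
  inferInstanceAs (Decidable (∀ j : Fin N, y j.castSucc ≤ x j ∧ x j ≤ y j.succ))

/-- Indices `j` with `y_j ∉ {x_{j-1}, x_j}` (the `p`-sequence indices). -/
def Pset {M N : ℕ} (y : Fin (N + 1) → Fin M) (x : Fin N → Fin M) : Finset (Fin (N + 1)) :=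
  univ.filter fun j =>
    ∀ ℓ : Fin N, ((ℓ : ℕ) = (j : ℕ) ∨ (ℓ : ℕ) + 1 = (j : ℕ)) → x ℓ ≠ y j

/-- Indices `ℓ` with `x_ℓ ∉ {y_ℓ, y_{ℓ+1}}` (the `q`-sequence indices). -/
def Qset {M N : ℕ} (y : Fin (N + 1) → Fin M) (x : Fin N → Fin M) : Finset (Fin N) :=
  univ.filter fun ℓ =>
    ∀ m : Fin (N + 1), ((m : ℕ) = (ℓ : ℕ) ∨ (m : ℕ) = (ℓ : ℕ) + 1) → y m ≠ x ℓ

/-- The (1-based) site `p_{i+1}` of the increasing enumeration of the `p`-sequence. -/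
def pseq {M N : ℕ} (y : Fin (N + 1) → Fin M) (x : Fin N → Fin M)
    (i : Fin (Pset y x).card) : ℕ :=
  ((y ((Pset y x).orderEmbOfFin rfl i)) : ℕ) + 1

/-- The (1-based) sites `q_i` of the `q`-sequence, extended by `q₀ = 0` and
`q_{k+1} = M + 1`. -/
def qseq {M N : ℕ} (y : Fin (N + 1) → Fin M) (x : Fin N → Fin M) (i : ℕ) : ℕ :=
  if h0 : i = 0 then 0
  else if h : i ≤ (Qset y x).card then
    ((x ((Qset y x).orderEmbOfFin rfl ⟨i - 1, by omega⟩)) : ℕ) + 1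
  else M + 1

/-- The number of particles `x_ℓ` strictly between the (1-based) sites `lo` and `hi`. -/
def cnt {M N : ℕ} (x : Fin N → Fin M) (lo hi : ℕ) : ℕ :=
  (univ.filter fun ℓ : Fin N => lo < (x ℓ : ℕ) + 1 ∧ (x ℓ : ℕ) + 1 < hi).card

/-- The skew polynomial `Ḡ_{y,x}(u)`. -/
def Gbarskew {M N : ℕ} (t a b c d e f u : K)
    (y : Fin (N + 1) → Fin M) (x : Fin N → Fin M) : K :=
  if interlace y x then
    ((1 - t) * d) ^ (Pset y x).card * ((1 - t) * c * u) ^ (Qset y x).card *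
      ∏ j : Fin (Pset y x).card,
        (e * u + t * f) ^ cnt x (pseq y x j) (qseq y x ((j : ℕ) + 1)) *
          (e * u + f) ^ (qseq y x ((j : ℕ) + 1) - pseq y x j - 1 -
            cnt x (pseq y x j) (qseq y x ((j : ℕ) + 1))) *
          (a * t * u + b) ^ cnt x (qseq y x (j : ℕ)) (pseq y x j) *
          (a * u + b) ^ (pseq y x j - qseq y x (j : ℕ) - 1 -
            cnt x (qseq y x (j : ℕ)) (pseq y x j))
  else 0

theorem Finset.card_filter_add_card_filter_compl {α : Type*} [Fintype α] [DecidableEq α]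
    (s : Finset α) (p : α → Prop) [DecidablePred p] :
    #{a ∈ s | p a} + #{a ∈ sᶜ | p a} = #{a | p a} := by
  rw [← card_union_of_disjoint (disjoint_filter_filter disjoint_compl_right), ← filter_union,
    union_compl]

theorem Fin.lt_card_filter_iff_of_antitone {n : ℕ} {p : Fin n → Prop} [DecidablePred p]
    (hp : Antitone p) (l : Fin n) : p l ↔ (l : ℕ) < #{i | p i} := by
  constructor
  · intro hl
    calc (l : ℕ) < #(Iic l) := by simp
      _ ≤ #{i | p i} := card_le_card fun i hi => by simpa using hp (mem_Iic.1 hi) hl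
  · intro hlt
    by_contra hl
    have : #{i | p i} ≤ #(Iio l) := card_le_card fun i hi => by
      simp only [mem_filter, mem_univ, true_and] at hi
      exact mem_Iio.2 (lt_of_not_ge fun hli => hl (hp hli hi))
    simp only [Fin.card_Iio] at this
    omega

theorem Finset.lt_card_filter_iff_of_antitone {α : Type*} [LinearOrder α] {p : α → Prop}
    [DecidablePred p] (hp : Antitone p) (s : Finset α) {k : ℕ} (h : #s = k) (l : Fin k) :
    p (s.orderEmbOfFin h l) ↔ (l : ℕ) < #{a ∈ s | p a} := by
  rw [Fin.lt_card_filter_iff_of_antitone (p := fun i => p (s.orderEmbOfFin h i))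
    (hp.comp_monotone (s.orderEmbOfFin h).monotone)]
  conv_rhs => rw [← s.map_orderEmbOfFin_univ h, filter_map, card_map]
  rfl

theorem Finset.card_filter_lt_orderEmbOfFin {α : Type*} [LinearOrder α] (s : Finset α) {k : ℕ}
    (h : #s = k) (l : Fin k) : #{a ∈ s | a < s.orderEmbOfFin h l} = l := by
  have key (l' : Fin k) : (l' : ℕ) < #{a ∈ s | a < s.orderEmbOfFin h l} ↔ l' < l :=
    (lt_card_filter_iff_of_antitone (fun _ _ hab h => lt_of_le_of_lt hab h) s h l').symm.trans
      (s.orderEmbOfFin h).lt_iff_lt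
  by_contra hne
  rcases Nat.lt_or_gt_of_ne hne with hlt | hgt
  · exact lt_irrefl _ ((key ⟨_, hlt.trans l.isLt⟩).2 hlt)
  · exact lt_irrefl _ ((key l).1 hgt)

theorem Finset.prod_range_prod_Ico {β : Type*} [CommMonoid β] (f : ℕ → β) {b : ℕ → ℕ}
    (hb : Monotone b) (n : ℕ) :
    ∏ l ∈ range n, ∏ i ∈ Ico (b l) (b (l + 1)), f i = ∏ i ∈ Ico (b 0) (b n), f i := by
  induction n with
  | zero => simp
  | succ n ih => rw [prod_range_succ, ih, prod_Ico_consecutive _ (hb n.zero_le) (hb n.le_succ)]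

section Occupation

variable {M n : ℕ}

def countBelow (z : Fin n → Fin M) (j : ℕ) : ℕ := #{m | (z m : ℕ) < j}

def occ (z : Fin n → Fin M) (i : ℕ) : Fin 2 := if ∃ m, (z m : ℕ) = i then 1 else 0

lemma cfg_eq_occ (z : Fin n → Fin M) (i : Fin M) : cfg z i = occ z i := by
  simp [cfg, occ, Fin.ext_iff]

lemma occ_apply_self (z : Fin n → Fin M) (m : Fin n) : occ z (z m) = 1 :=
  if_pos ⟨m, rfl⟩

lemma occ_eq_zero {z : Fin n → Fin M} {i : ℕ} (h : ∀ m, (z m : ℕ) ≠ i) : occ z i = 0 :=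
  if_neg fun ⟨m, hm⟩ => h m hm

lemma countBelow_zero (z : Fin n → Fin M) : countBelow z 0 = 0 := by
  simp [countBelow]

lemma countBelow_le (z : Fin n → Fin M) (j : ℕ) : countBelow z j ≤ n :=
  (card_filter_le _ _).trans (card_fin n).le

lemma countBelow_of_le (z : Fin n → Fin M) {j : ℕ} (hj : M ≤ j) : countBelow z j = n := by
  rw [countBelow, filter_true_of_mem fun m _ => (z m).isLt.trans_le hj, card_univ,
    Fintype.card_fin]

lemma countBelow_succ {z : Fin n → Fin M} (hz : Function.Injective z) (i : ℕ) :
    countBelow z (i + 1) = countBelow z i + occ z i := by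
  have hsplit : countBelow z (i + 1) = countBelow z i + #{m | (z m : ℕ) = i} := by
    rw [countBelow, countBelow, ← card_union_of_disjoint
      (disjoint_filter.2 fun m _ h => by omega)]
    congr 1
    ext m
    simp only [mem_filter, mem_univ, true_and, mem_union]
    omega
  rw [hsplit, occ]
  split_ifs with h
  · obtain ⟨m₀, hm₀⟩ := h
    rw [card_eq_one.2 ⟨m₀, ?_⟩, Fin.val_one]
    ext m
    simp only [mem_filter, mem_univ, true_and, mem_singleton]
    exact ⟨fun hm => hz (Fin.ext (hm.trans hm₀.symm)), fun hm => hm ▸ hm₀⟩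
  · push Not at h
    simp [filter_false_of_mem fun m _ => h m]

lemma lt_countBelow_iff {z : Fin n → Fin M} (hz : Monotone z) (m : Fin n) (j : ℕ) :
    (z m : ℕ) < j ↔ (m : ℕ) < countBelow z j :=
  Fin.lt_card_filter_iff_of_antitone (p := fun m => (z m : ℕ) < j)
    (fun _ _ hab h => Nat.lt_of_le_of_lt (hz hab) h) m

lemma prod_Ico_ite_occ {β : Type*} [CommMonoid β] {z : Fin n → Fin M}
    (hz : Function.Injective z) (lo hi : ℕ) (A B : β) :
    ∏ i ∈ Ico lo (hi - 1), (if occ z i = 1 then A else B) =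
      A ^ cnt z lo hi * B ^ (hi - lo - 1 - cnt z lo hi) := by
  have hocc : #{i ∈ Ico lo (hi - 1) | occ z i = 1} = cnt z lo hi := by
    rw [cnt, ← card_image_of_injective _ (Fin.val_injective.comp hz)]
    congr 1
    ext i
    simp only [occ, mem_filter, mem_Ico, mem_image, mem_univ, true_and, Function.comp_apply,
      ite_eq_left_iff, zero_ne_one, imp_false, not_not]
    constructor
    · rintro ⟨⟨h₁, h₂⟩, m, rfl⟩
      exact ⟨m, by omega, rfl⟩
    · rintro ⟨m, hm, rfl⟩
      exact ⟨by omega, m, rfl⟩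
  have htotal := card_filter_add_card_filter_not (s := Ico lo (hi - 1)) (fun i => occ z i = 1)
  rw [Nat.card_Ico, hocc] at htotal
  rw [prod_ite, prod_const, prod_const, hocc, show hi - lo - 1 - cnt z lo hi =
    #{i ∈ Ico lo (hi - 1) | ¬occ z i = 1} by omega]

end Occupation

section Skew

variable {M N : ℕ} {x : Fin N → Fin M} {y : Fin (N + 1) → Fin M}

lemma countBelow_bounds_of_interlace (hx : Monotone x) (hy : Monotone y)
    (hI : interlace y x) (j : ℕ) :
    countBelow x j ≤ countBelow y j ∧ countBelow y j ≤ countBelow x j + 1 := by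
  constructor
  · by_contra! h
    let ℓ : Fin N := ⟨countBelow y j, h.trans_le (countBelow_le x j)⟩
    have hxℓ := (lt_countBelow_iff hx ℓ j).2 h
    exact lt_irrefl _ ((lt_countBelow_iff hy ℓ.castSucc j).1 (lt_of_le_of_lt (hI ℓ).1 hxℓ))
  · by_contra! h
    let ℓ : Fin N := ⟨countBelow x j, by have := countBelow_le y j; omega⟩
    have hyℓ := (lt_countBelow_iff hy ℓ.succ j).2 h
    exact lt_irrefl _ ((lt_countBelow_iff hx ℓ j).1 (lt_of_le_of_lt (hI ℓ).2 hyℓ))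

lemma interlace_of_countBelow_bounds (hx : Monotone x) (hy : Monotone y)
    (h : ∀ j ≤ M, countBelow x j ≤ countBelow y j ∧ countBelow y j ≤ countBelow x j + 1) :
    interlace y x := by
  intro ℓ
  constructor
  · have hℓ := (lt_countBelow_iff hx ℓ _).1 (Nat.lt_add_one (x ℓ : ℕ))
    have := (lt_countBelow_iff hy ℓ.castSucc _).2 (lt_of_lt_of_le hℓ (h _ (x ℓ).isLt).1)
    exact Fin.le_def.2 (Nat.lt_succ_iff.1 this)
  · have hℓ := (lt_countBelow_iff hy ℓ.succ _).1 (Nat.lt_add_one (y ℓ.succ : ℕ))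
    have hj := (h ((y ℓ.succ : ℕ) + 1) (y ℓ.succ).isLt).2
    simp only [Fin.val_succ] at hℓ
    have := (lt_countBelow_iff hx ℓ ((y ℓ.succ : ℕ) + 1)).2 (by omega)
    exact Fin.le_def.2 (Nat.lt_succ_iff.1 this)

lemma val_add_val_eq_of_LL_ne_zero {t a b c d e f u : K} {γ δ α β : Fin 2}
    (h : LL t a b c d e f u γ δ α β ≠ 0) : (γ : ℕ) + δ = α + β := by
  fin_cases γ <;> fin_cases δ <;> fin_cases α <;> fin_cases β <;> simp_all [LL]

/-- The auxiliary state between the (0-based) sites `j - 1` and `j`, as forced by particle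
conservation. -/
def auxState (x : Fin N → Fin M) (y : Fin (N + 1) → Fin M) (j : ℕ) : Fin 2 :=
  if countBelow y j = countBelow x j + 1 then 1 else 0

def siteWeight (t a b c d e f u : K) (x : Fin N → Fin M) (y : Fin (N + 1) → Fin M)
    (i : ℕ) : K :=
  LL t a b c d e f u (auxState x y (i + 1)) (occ x i) (auxState x y i) (occ y i)

lemma auxState_zero : auxState x y 0 = 0 := by
  simp [auxState, countBelow_zero]

lemma auxState_of_le {j : ℕ} (hj : M ≤ j) : auxState x y j = 1 := by
  simp [auxState, countBelow_of_le _ hj]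

lemma eq_auxState_of_val_add_countBelow {α : Fin 2} {j : ℕ}
    (h : (α : ℕ) + countBelow x j = countBelow y j) : α = auxState x y j := by
  have := α.isLt
  unfold auxState
  split_ifs <;> ext <;> simp <;> omega

lemma val_add_countBelow_eq_of_prod_LL_ne_zero {t a b c d e f u : K}
    (hx : Function.Injective x) (hy : Function.Injective y) {α : Fin (M + 1) → Fin 2}
    (hα : α 0 = 0)
    (hprod : ∏ j : Fin M, LL t a b c d e f u (α j.succ) (cfg x j) (α j.castSucc) (cfg y j) ≠ 0)
    (j : Fin (M + 1)) : (α j : ℕ) + countBelow x j = countBelow y j := by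
  induction j using Fin.induction with
  | zero => simp [hα, countBelow_zero]
  | succ j ih =>
    have hcons := val_add_val_eq_of_LL_ne_zero fun h0 => hprod (prod_eq_zero (mem_univ j) h0)
    rw [cfg_eq_occ, cfg_eq_occ] at hcons
    simp only [Fin.val_succ, Fin.val_castSucc] at ih ⊢
    rw [countBelow_succ hx, countBelow_succ hy]
    omega

lemma Cop_cfg_cfg (t a b c d e f u : K) (hx : StrictMono x) (hy : StrictMono y) :
    Cop M t a b c d e f u (cfg x) (cfg y) =
      if interlace y x then ∏ i ∈ range M, siteWeight t a b c d e f u x y i else 0 := by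
  have forced {α : Fin (M + 1) → Fin 2} (hα : α 0 = 0) (hprod : ∏ j : Fin M,
      LL t a b c d e f u (α j.succ) (cfg x j) (α j.castSucc) (cfg y j) ≠ 0) :=
    val_add_countBelow_eq_of_prod_LL_ne_zero hx.injective hy.injective hα hprod
  simp only [Cop, Matrix.of_apply]
  split_ifs with hI
  · rw [sum_eq_single fun j : Fin (M + 1) => auxState x y j]
    · rw [if_pos ⟨auxState_zero, auxState_of_le le_rfl⟩, ← Fin.prod_univ_eq_prod_range]
      simp [siteWeight, cfg_eq_occ]
    · intro α _ hne
      split_ifs with hα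
      · by_contra hprod
        exact hne (funext fun j => eq_auxState_of_val_add_countBelow (forced hα.1 hprod j))
      · rfl
    · simp
  · refine sum_eq_zero fun α _ => ?_
    split_ifs with hα
    · by_contra hprod
      refine hI (interlace_of_countBelow_bounds hx.monotone hy.monotone fun j hj => ?_)
      have hj' := forced hα.1 hprod ⟨j, Nat.lt_succ_of_le hj⟩
      have := (α ⟨j, Nat.lt_succ_of_le hj⟩).isLt
      dsimp only at hj'
      omega
    · rfl

lemma val_eq_or_succ_eq_of_eq (hy : StrictMono y) (hI : interlace y x) {ℓ : Fin N}
    {m : Fin (N + 1)} (h : x ℓ = y m) : (ℓ : ℕ) = m ∨ (ℓ : ℕ) + 1 = m := by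
  have h₁ : ℓ.castSucc ≤ m := hy.le_iff_le.1 (h ▸ (hI ℓ).1)
  have h₂ : m ≤ ℓ.succ := hy.le_iff_le.1 (h ▸ (hI ℓ).2)
  rw [Fin.le_def] at h₁ h₂
  simp only [Fin.val_castSucc, Fin.val_succ] at h₁ h₂
  omega

lemma mem_Pset_iff (hy : StrictMono y) (hI : interlace y x) (m : Fin (N + 1)) :
    m ∈ Pset y x ↔ ∀ ℓ, x ℓ ≠ y m := by
  simp only [Pset, mem_filter, mem_univ, true_and]
  exact ⟨fun h ℓ hℓ => h ℓ (val_eq_or_succ_eq_of_eq hy hI hℓ) hℓ, fun h ℓ _ => h ℓ⟩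

lemma mem_Qset_iff (hy : StrictMono y) (hI : interlace y x) (ℓ : Fin N) :
    ℓ ∈ Qset y x ↔ ∀ m, y m ≠ x ℓ := by
  simp only [Qset, mem_filter, mem_univ, true_and]
  refine ⟨fun h m hm => h m ?_ hm, fun h m _ => h m⟩
  rcases val_eq_or_succ_eq_of_eq hy hI hm.symm with h' | h' <;> omega

lemma occ_apply_of_mem_Pset (hy : StrictMono y) (hI : interlace y x) {m : Fin (N + 1)}
    (hm : m ∈ Pset y x) : occ x (y m) = 0 :=
  occ_eq_zero fun ℓ h => (mem_Pset_iff hy hI m).1 hm ℓ (Fin.ext h)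

lemma occ_apply_of_mem_Qset (hy : StrictMono y) (hI : interlace y x) {ℓ : Fin N}
    (hℓ : ℓ ∈ Qset y x) : occ y (x ℓ) = 0 :=
  occ_eq_zero fun m h => (mem_Qset_iff hy hI ℓ).1 hℓ m (Fin.ext h)

def upCount (x : Fin N → Fin M) (y : Fin (N + 1) → Fin M) (j : ℕ) : ℕ :=
  #{m ∈ Pset y x | (y m : ℕ) < j}

def downCount (x : Fin N → Fin M) (y : Fin (N + 1) → Fin M) (j : ℕ) : ℕ :=
  #{ℓ ∈ Qset y x | (x ℓ : ℕ) < j}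

lemma countBelow_add_downCount (hx : StrictMono x) (hy : StrictMono y) (hI : interlace y x)
    (j : ℕ) : countBelow y j + downCount x y j = countBelow x j + upCount x y j := by
  have hy' := card_filter_add_card_filter_compl (Pset y x) fun m => (y m : ℕ) < j
  have hx' := card_filter_add_card_filter_compl (Qset y x) fun ℓ => (x ℓ : ℕ) < j
  have shared : #{m ∈ (Pset y x)ᶜ | (y m : ℕ) < j} = #{ℓ ∈ (Qset y x)ᶜ | (x ℓ : ℕ) < j} := by
    rw [← card_image_of_injective _ hy.injective, ← card_image_of_injective _ hx.injective]
    congr 1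
    ext i
    simp only [mem_image, mem_filter, mem_compl, mem_Pset_iff hy hI, mem_Qset_iff hy hI,
      not_forall, not_not]
    constructor
    · rintro ⟨m, ⟨⟨ℓ, hℓ⟩, hm⟩, rfl⟩
      exact ⟨ℓ, ⟨⟨m, hℓ.symm⟩, hℓ ▸ hm⟩, hℓ⟩
    · rintro ⟨ℓ, ⟨⟨m, hm⟩, hℓ⟩, rfl⟩
      exact ⟨m, ⟨⟨ℓ, hm.symm⟩, hm ▸ hℓ⟩, hm⟩
  rw [countBelow, countBelow, upCount, downCount]
  omega

lemma card_Pset (hx : StrictMono x) (hy : StrictMono y) (hI : interlace y x) :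
    #(Pset y x) = #(Qset y x) + 1 := by
  have h := countBelow_add_downCount hx hy hI M
  rw [countBelow_of_le _ le_rfl, countBelow_of_le _ le_rfl, downCount, upCount,
    filter_true_of_mem fun ℓ _ => (x ℓ).isLt, filter_true_of_mem fun m _ => (y m).isLt] at h
  omega

lemma val_le_card_Qset (hx : StrictMono x) (hy : StrictMono y) (hI : interlace y x)
    (l : Fin #(Pset y x)) : (l : ℕ) ≤ #(Qset y x) := by
  have := l.isLt
  have := card_Pset hx hy hI
  omega

lemma upCount_bounds (hx : StrictMono x) (hy : StrictMono y) (hI : interlace y x) (j : ℕ) :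
    downCount x y j ≤ upCount x y j ∧ upCount x y j ≤ downCount x y j + 1 := by
  have := countBelow_add_downCount hx hy hI j
  have := countBelow_bounds_of_interlace hx.monotone hy.monotone hI j
  omega

lemma upCount_apply_orderEmbOfFin (hy : StrictMono y) (l : Fin #(Pset y x)) :
    upCount x y (y ((Pset y x).orderEmbOfFin rfl l)) = l := by
  simp only [upCount, Fin.val_fin_lt, hy.lt_iff_lt, card_filter_lt_orderEmbOfFin]

lemma downCount_apply_orderEmbOfFin (hx : StrictMono x) (l : Fin #(Qset y x)) :
    downCount x y (x ((Qset y x).orderEmbOfFin rfl l)) = l := by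
  simp only [downCount, Fin.val_fin_lt, hx.lt_iff_lt, card_filter_lt_orderEmbOfFin]

lemma pseq_le_iff (hy : StrictMono y) (l : Fin #(Pset y x)) (j : ℕ) :
    pseq y x l ≤ j ↔ (l : ℕ) < upCount x y j :=
  Nat.add_one_le_iff.trans <| lt_card_filter_iff_of_antitone (p := fun m => (y m : ℕ) < j)
    (fun _ _ hab h => Nat.lt_of_le_of_lt (hy.monotone hab) h) _ rfl l

lemma qseq_le_iff (hx : StrictMono x) {l : ℕ} (hl : l ≤ #(Qset y x)) (j : ℕ) :
    qseq y x l ≤ j ↔ l ≤ downCount x y j := by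
  unfold qseq
  split_ifs with h0
  · simp [h0]
  · rw [Nat.add_one_le_iff, lt_card_filter_iff_of_antitone (p := fun ℓ => (x ℓ : ℕ) < j)
      (fun _ _ hab h => Nat.lt_of_le_of_lt (hx.monotone hab) h), downCount]
    simp only
    omega

lemma qseq_zero : qseq y x 0 = 0 := rfl

lemma qseq_succ (l : Fin #(Qset y x)) :
    qseq y x (l + 1) = x ((Qset y x).orderEmbOfFin rfl l) + 1 := by
  simp [qseq, Nat.succ_le_of_lt l.isLt]

lemma qseq_of_card_lt {l : ℕ} (hl : #(Qset y x) < l) : qseq y x l = M + 1 := by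
  rw [qseq, dif_neg (by omega), dif_neg (by omega)]

lemma countBelow_eq_of_qseq_le_of_lt_pseq (hx : StrictMono x) (hy : StrictMono y)
    (hI : interlace y x) (l : Fin #(Pset y x)) {j : ℕ} (h₁ : qseq y x l ≤ j)
    (h₂ : j < pseq y x l) : countBelow y j = countBelow x j := by
  have hD := (qseq_le_iff hx (val_le_card_Qset hx hy hI l) j).1 h₁
  have hU := (pseq_le_iff hy l j).not.1 (not_le.2 h₂)
  have := countBelow_add_downCount hx hy hI j
  have := upCount_bounds hx hy hI j
  omega

lemma countBelow_eq_succ_of_pseq_le_of_lt_qseq (hx : StrictMono x) (hy : StrictMono y)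
    (hI : interlace y x) (l : Fin #(Pset y x)) {j : ℕ} (h₁ : pseq y x l ≤ j)
    (h₂ : j < qseq y x (l + 1)) : countBelow y j = countBelow x j + 1 := by
  have hU := (pseq_le_iff hy l j).1 h₁
  have hD : downCount x y j ≤ l := by
    by_cases hl : (l : ℕ) + 1 ≤ #(Qset y x)
    · exact Nat.lt_succ_iff.1 (not_le.1 ((qseq_le_iff hx hl j).not.1 (not_le.2 h₂)))
    · have := val_le_card_Qset hx hy hI l
      have : downCount x y j ≤ #(Qset y x) := card_filter_le _ _
      omega
  have := countBelow_add_downCount hx hy hI j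
  have := upCount_bounds hx hy hI j
  omega

lemma countBelow_apply_of_mem_Pset (hx : StrictMono x) (hy : StrictMono y)
    (hI : interlace y x) {m : Fin (N + 1)} (hm : m ∈ Pset y x) :
    countBelow y (y m) = countBelow x (y m) := by
  have hx' := countBelow_succ hx.injective (y m)
  have hy' := countBelow_succ hy.injective (y m)
  rw [occ_apply_of_mem_Pset hy hI hm, Fin.val_zero] at hx'
  rw [occ_apply_self, Fin.val_one] at hy'
  have := countBelow_bounds_of_interlace hx.monotone hy.monotone hI (y m)
  have := countBelow_bounds_of_interlace hx.monotone hy.monotone hI (y m + 1)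
  omega

lemma countBelow_apply_of_mem_Qset (hx : StrictMono x) (hy : StrictMono y)
    (hI : interlace y x) {ℓ : Fin N} (hℓ : ℓ ∈ Qset y x) :
    countBelow y (x ℓ) = countBelow x (x ℓ) + 1 := by
  have hx' := countBelow_succ hx.injective (x ℓ)
  have hy' := countBelow_succ hy.injective (x ℓ)
  rw [occ_apply_self, Fin.val_one] at hx'
  rw [occ_apply_of_mem_Qset hy hI hℓ, Fin.val_zero] at hy'
  have := countBelow_bounds_of_interlace hx.monotone hy.monotone hI (x ℓ)
  have := countBelow_bounds_of_interlace hx.monotone hy.monotone hI (x ℓ + 1)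
  omega

lemma qseq_lt_pseq (hx : StrictMono x) (hy : StrictMono y) (hI : interlace y x)
    (l : Fin #(Pset y x)) : qseq y x l < pseq y x l := by
  have hm := (Pset y x).orderEmbOfFin_mem rfl l
  have hU := upCount_apply_orderEmbOfFin (x := x) hy l
  have := countBelow_apply_of_mem_Pset hx hy hI hm
  have := countBelow_add_downCount hx hy hI (y ((Pset y x).orderEmbOfFin rfl l))
  have hq := (qseq_le_iff hx (val_le_card_Qset hx hy hI l) _).2
    (show (l : ℕ) ≤ downCount x y (y ((Pset y x).orderEmbOfFin rfl l)) by omega)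
  exact Nat.lt_succ_of_le hq

lemma pseq_lt_qseq_succ (hx : StrictMono x) (hy : StrictMono y) (hI : interlace y x)
    (l : Fin #(Pset y x)) : pseq y x l < qseq y x (l + 1) := by
  by_cases hl : (l : ℕ) < #(Qset y x)
  · have hℓ := (Qset y x).orderEmbOfFin_mem rfl ⟨l, hl⟩
    have hD := downCount_apply_orderEmbOfFin (y := y) hx ⟨l, hl⟩
    have := countBelow_apply_of_mem_Qset hx hy hI hℓ
    have := countBelow_add_downCount hx hy hI (x ((Qset y x).orderEmbOfFin rfl ⟨l, hl⟩))
    have hp := (pseq_le_iff hy l _).2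
      (show (l : ℕ) < upCount x y (x ((Qset y x).orderEmbOfFin rfl ⟨l, hl⟩)) by
        simp only at hD; omega)
    rw [qseq_succ ⟨l, hl⟩]
    exact Nat.lt_succ_of_le hp
  · rw [qseq_of_card_lt (by omega)]
    exact Nat.lt_succ_of_le (y _).isLt

lemma qseq_lt_qseq_succ (hx : StrictMono x) (hy : StrictMono y) (hI : interlace y x)
    (l : Fin #(Pset y x)) : qseq y x l < qseq y x (l + 1) :=
  (qseq_lt_pseq hx hy hI l).trans (pseq_lt_qseq_succ hx hy hI l)

lemma monotone_qseq (hx : StrictMono x) (hy : StrictMono y) (hI : interlace y x) :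
    Monotone (qseq y x) := by
  refine monotone_nat_of_le_succ fun l => ?_
  by_cases hl : l < #(Pset y x)
  · exact (qseq_lt_qseq_succ hx hy hI ⟨l, hl⟩).le
  · have := card_Pset hx hy hI
    rw [qseq_of_card_lt (by omega), qseq_of_card_lt (by omega)]

lemma qseq_card_Qset_le (hx : StrictMono x) (hy : StrictMono y) (hI : interlace y x) :
    qseq y x #(Qset y x) ≤ M := by
  have hk : #(Qset y x) < #(Pset y x) := by
    have := card_Pset hx hy hI
    omega
  exact ((qseq_lt_pseq hx hy hI ⟨_, hk⟩).trans_le (y _).isLt).le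

variable (t a b c d e f u : K)

lemma siteWeight_of_countBelow_eq (hx : Function.Injective x) (hy : Function.Injective y)
    {i : ℕ} (h : countBelow y i = countBelow x i)
    (h' : countBelow y (i + 1) = countBelow x (i + 1)) :
    siteWeight t a b c d e f u x y i = if occ x i = 1 then a * t * u + b else a * u + b := by
  have hocc : occ y i = occ x i := Fin.ext (by
    have := countBelow_succ hx i
    have := countBelow_succ hy i
    omega)
  simp only [siteWeight, auxState, h, h', hocc]
  generalize occ x i = o
  fin_cases o <;> simp [LL]

lemma siteWeight_of_countBelow_eq_succ (hx : Function.Injective x) (hy : Function.Injective y)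
    {i : ℕ} (h : countBelow y i = countBelow x i + 1)
    (h' : countBelow y (i + 1) = countBelow x (i + 1) + 1) :
    siteWeight t a b c d e f u x y i = if occ x i = 1 then e * u + t * f else e * u + f := by
  have hocc : occ y i = occ x i := Fin.ext (by
    have := countBelow_succ hx i
    have := countBelow_succ hy i
    omega)
  simp only [siteWeight, auxState, h, h', hocc]
  generalize occ x i = o
  fin_cases o <;> simp [LL]

lemma siteWeight_apply_of_mem_Pset (hx : StrictMono x) (hy : StrictMono y) (hI : interlace y x)
    {m : Fin (N + 1)} (hm : m ∈ Pset y x) :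
    siteWeight t a b c d e f u x y (y m) = (1 - t) * d := by
  have h := countBelow_apply_of_mem_Pset hx hy hI hm
  have hx' := countBelow_succ hx.injective (y m)
  have hy' := countBelow_succ hy.injective (y m)
  rw [occ_apply_of_mem_Pset hy hI hm, Fin.val_zero] at hx'
  rw [occ_apply_self, Fin.val_one] at hy'
  rw [siteWeight, occ_apply_of_mem_Pset hy hI hm, occ_apply_self]
  simp [auxState, LL, h, hx', hy']

lemma siteWeight_apply_of_mem_Qset (hx : StrictMono x) (hy : StrictMono y) (hI : interlace y x)
    {ℓ : Fin N} (hℓ : ℓ ∈ Qset y x) :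
    siteWeight t a b c d e f u x y (x ℓ) = (1 - t) * c * u := by
  have h := countBelow_apply_of_mem_Qset hx hy hI hℓ
  have hx' := countBelow_succ hx.injective (x ℓ)
  have hy' := countBelow_succ hy.injective (x ℓ)
  rw [occ_apply_self, Fin.val_one] at hx'
  rw [occ_apply_of_mem_Qset hy hI hℓ, Fin.val_zero] at hy'
  rw [siteWeight, occ_apply_self, occ_apply_of_mem_Qset hy hI hℓ]
  simp [auxState, LL, h, hx', hy']

/- Sites are 0-based here, while `pseq` and `qseq` are 1-based: the sites strictly between the
1-based sites `q` and `p` form `Ico q (p - 1)`. -/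
lemma prod_Ico_qseq_pseq_siteWeight (hx : StrictMono x) (hy : StrictMono y) (hI : interlace y x)
    (l : Fin #(Pset y x)) :
    ∏ i ∈ Ico (qseq y x l) (pseq y x l - 1), siteWeight t a b c d e f u x y i =
      (a * t * u + b) ^ cnt x (qseq y x l) (pseq y x l) *
        (a * u + b) ^ (pseq y x l - qseq y x l - 1 - cnt x (qseq y x l) (pseq y x l)) := by
  rw [← prod_Ico_ite_occ hx.injective]
  refine prod_congr rfl fun i hi => ?_
  rw [mem_Ico] at hi
  exact siteWeight_of_countBelow_eq t a b c d e f u hx.injective hy.injective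
    (countBelow_eq_of_qseq_le_of_lt_pseq hx hy hI l hi.1 (by omega))
    (countBelow_eq_of_qseq_le_of_lt_pseq hx hy hI l (by omega) (by omega))

lemma prod_Ico_pseq_qseq_siteWeight (hx : StrictMono x) (hy : StrictMono y) (hI : interlace y x)
    (l : Fin #(Pset y x)) :
    ∏ i ∈ Ico (pseq y x l) (qseq y x (l + 1) - 1), siteWeight t a b c d e f u x y i =
      (e * u + t * f) ^ cnt x (pseq y x l) (qseq y x (l + 1)) *
        (e * u + f) ^ (qseq y x (l + 1) - pseq y x l - 1 -
          cnt x (pseq y x l) (qseq y x (l + 1))) := by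
  rw [← prod_Ico_ite_occ hx.injective]
  refine prod_congr rfl fun i hi => ?_
  rw [mem_Ico] at hi
  exact siteWeight_of_countBelow_eq_succ t a b c d e f u hx.injective hy.injective
    (countBelow_eq_succ_of_pseq_le_of_lt_qseq hx hy hI l hi.1 (by omega))
    (countBelow_eq_succ_of_pseq_le_of_lt_qseq hx hy hI l (by omega) (by omega))

lemma prod_Ico_qseq_siteWeight (hx : StrictMono x) (hy : StrictMono y) (hI : interlace y x)
    (l : Fin #(Pset y x)) :
    ∏ i ∈ Ico (qseq y x l) (qseq y x (l + 1) - 1), siteWeight t a b c d e f u x y i =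
      (1 - t) * d *
        ((e * u + t * f) ^ cnt x (pseq y x l) (qseq y x (l + 1)) *
          (e * u + f) ^ (qseq y x (l + 1) - pseq y x l - 1 -
            cnt x (pseq y x l) (qseq y x (l + 1))) *
          (a * t * u + b) ^ cnt x (qseq y x l) (pseq y x l) *
          (a * u + b) ^ (pseq y x l - qseq y x l - 1 - cnt x (qseq y x l) (pseq y x l))) := by
  have hqp := qseq_lt_pseq hx hy hI l
  have hpq := pseq_lt_qseq_succ hx hy hI l
  have hup : siteWeight t a b c d e f u x y (pseq y x l - 1) = (1 - t) * d :=
    siteWeight_apply_of_mem_Pset t a b c d e f u hx hy hI ((Pset y x).orderEmbOfFin_mem rfl l)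
  have hcut := prod_Ico_succ_top (show qseq y x l ≤ pseq y x l - 1 by omega)
    (siteWeight t a b c d e f u x y)
  rw [Nat.sub_add_cancel (by omega)] at hcut
  rw [← prod_Ico_consecutive _ hqp.le (by omega), hcut, hup,
    prod_Ico_qseq_pseq_siteWeight t a b c d e f u hx hy hI l,
    prod_Ico_pseq_qseq_siteWeight t a b c d e f u hx hy hI l]
  ring

lemma prod_Ico_qseq_qseq_succ_siteWeight (hx : StrictMono x) (hy : StrictMono y)
    (hI : interlace y x) {l : ℕ} (hl : l < #(Qset y x)) :
    ∏ i ∈ Ico (qseq y x l) (qseq y x (l + 1)), siteWeight t a b c d e f u x y i =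
      (∏ i ∈ Ico (qseq y x l) (qseq y x (l + 1) - 1), siteWeight t a b c d e f u x y i) *
        ((1 - t) * c * u) := by
  have hsucc : qseq y x (l + 1) = x ((Qset y x).orderEmbOfFin rfl ⟨l, hl⟩) + 1 :=
    qseq_succ (x := x) (y := y) ⟨l, hl⟩
  have hlt := qseq_lt_qseq_succ hx hy hI ⟨l, by have := card_Pset hx hy hI; omega⟩
  rw [hsucc] at hlt
  rw [hsucc, Nat.add_sub_cancel, prod_Ico_succ_top (Nat.lt_succ_iff.1 hlt),
    siteWeight_apply_of_mem_Qset t a b c d e f u hx hy hI ((Qset y x).orderEmbOfFin_mem rfl _)]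

lemma prod_range_siteWeight (hx : StrictMono x) (hy : StrictMono y) (hI : interlace y x) :
    ∏ i ∈ range M, siteWeight t a b c d e f u x y i =
      ((1 - t) * d) ^ #(Pset y x) * ((1 - t) * c * u) ^ #(Qset y x) *
        ∏ j : Fin #(Pset y x),
          (e * u + t * f) ^ cnt x (pseq y x j) (qseq y x ((j : ℕ) + 1)) *
            (e * u + f) ^ (qseq y x ((j : ℕ) + 1) - pseq y x j - 1 -
              cnt x (pseq y x j) (qseq y x ((j : ℕ) + 1))) *
            (a * t * u + b) ^ cnt x (qseq y x (j : ℕ)) (pseq y x j) *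
            (a * u + b) ^ (pseq y x j - qseq y x (j : ℕ) - 1 -
              cnt x (qseq y x (j : ℕ)) (pseq y x j)) := by
  set k := #(Qset y x)
  set G : ℕ → K := fun l =>
    ∏ i ∈ Ico (qseq y x l) (qseq y x (l + 1) - 1), siteWeight t a b c d e f u x y i
  calc ∏ i ∈ range M, siteWeight t a b c d e f u x y i
      = (∏ i ∈ Ico (qseq y x 0) (qseq y x k), siteWeight t a b c d e f u x y i) * G k := by
        simp only [G]
        rw [qseq_of_card_lt (Nat.lt_succ_self k), Nat.add_sub_cancel, qseq_zero, range_eq_Ico,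
          prod_Ico_consecutive _ (Nat.zero_le _) (qseq_card_Qset_le hx hy hI)]
    _ = (∏ l ∈ range k, G l * ((1 - t) * c * u)) * G k := by
        rw [← prod_range_prod_Ico _ (monotone_qseq hx hy hI), prod_congr rfl fun l hl =>
          prod_Ico_qseq_qseq_succ_siteWeight t a b c d e f u hx hy hI (mem_range.1 hl)]
    _ = ((1 - t) * c * u) ^ k * ∏ l : Fin #(Pset y x), G l := by
        rw [Fin.prod_univ_eq_prod_range G, card_Pset hx hy hI, prod_range_succ, prod_mul_distrib,
          prod_const, card_range]
        ring
    _ = _ := by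
        simp only [G, prod_Ico_qseq_siteWeight t a b c d e f u hx hy hI]
        rw [prod_mul_distrib, prod_const, card_univ, Fintype.card_fin]
        ring

end Skew

theorem C_matrix_element_general {M N : ℕ} (t a b c d e f : K)
    (u : K)
    (x : Fin N → Fin M) (hx : StrictMono x)
    (y : Fin (N + 1) → Fin M) (hy : StrictMono y) :
    Cop M t a b c d e f u (cfg x) (cfg y) = Gbarskew t a b c d e f u y x := by
  rw [Cop_cfg_cfg t a b c d e f u hx hy, Gbarskew]
  split_ifs with hI
  · exact prod_range_siteWeight t a b c d e f u hx hy hI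
  · rfl

theorem C_matrix_element {M N : ℕ} (t a b c d e f : K)
    (ht : t ≠ 1) (ha : a ≠ 0) (hb : b ≠ 0) (hc : c ≠ 0) (hd : d ≠ 0)
    (he : e ≠ 0) (hf : f ≠ 0)
    (hcon1 : c * d + a * f = 0) (hcon2 : t * (c * d) + b * e = 0)
    (u : K)
    (x : Fin N → Fin M) (hx : StrictMono x)
    (y : Fin (N + 1) → Fin M) (hy : StrictMono y) :
    Cop M t a b c d e f u (cfg x) (cfg y) = Gbarskew t a b c d e f u y x :=
  C_matrix_element_general t a b c d e f u x hx y hy
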